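/- arXiv:1511.01197 — 5 statements merged into one kernel-verified Lean document; each statement's English description precedes it below -/
import Mathlib

section
/- Let Γ ⊆ ℕⁿ × ℕ be a sub-semigroup and suppose the set Γ₁ := {v ∈ ℕⁿ : (v,1) ∈ Γ} contains points v₀, v₁, …, v_k such that the convex hull conv(v₀,…,v_k) equals the slice Δ(Γ) := closure(cone(Γ)) ∩ (ℝⁿ × {1}) (identified with a subset of ℝⁿ). If moreover all points of Γ at each height m lie in m·Δ(Γ), then the cone generated by Γ is the rational polyhedral cone generated by (v₀,1),…,(v_k,1). -/
/-!
A point `(p, m)` of `Γ` is `m • (y, 1)` with `y ∈ Δ(Γ) = conv(vᵢ)`, and since `y ↦ (y, 1)` is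
affine, `(y, 1)` is a convex combination of the `(vᵢ, 1)`. Conversely the `(vᵢ, 1)` lie in `Γ`.
-/

open Set Pointwise

/-- The convex cone generated by a set `S` in a real vector space: the set of all finite
nonnegative real combinations of elements of `S`. -/
def coneGen {E : Type*} [AddCommMonoid E] [Module ℝ E] (S : Set E) : Set E :=
  {x | ∃ (k : ℕ) (c : Fin k → ℝ) (v : Fin k → E),
    (∀ i, 0 ≤ c i) ∧ (∀ i, v i ∈ S) ∧ x = ∑ i, c i • v i}

/-- The embedding `ℕⁿ × ℕ → ℝⁿ⁺¹`, `(v, m) ↦ (v, m)`. -/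
def toVec {n : ℕ} (p : (Fin n → ℕ) × ℕ) : Fin (n + 1) → ℝ :=
  Fin.snoc (fun i => (p.1 i : ℝ)) (p.2 : ℝ)

/-- The Okounkov body of a sub-semigroup `Γ ⊆ ℕⁿ × ℕ`: the slice at last coordinate `1` of the
closed convex cone in `ℝⁿ⁺¹` generated by `Γ`, identified with a subset of `ℝⁿ`. -/
def okBody {n : ℕ} (Γ : Set ((Fin n → ℕ) × ℕ)) : Set (Fin n → ℝ) :=
  {v | Fin.snoc v (1 : ℝ) ∈ closure (coneGen (toVec '' Γ))}

namespace Fin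

variable {n : ℕ} {M : Type*}

lemma snoc_add_snoc [Add M] (x y : Fin n → M) (a b : M) :
    (snoc x a : Fin (n + 1) → M) + snoc y b = snoc (x + y) (a + b) := by
  ext i
  refine lastCases ?_ (fun j => ?_) i <;> simp

lemma smul_snoc {R : Type*} [SMul R M] (c : R) (x : Fin n → M) (a : M) :
    c • (snoc x a : Fin (n + 1) → M) = snoc (c • x) (c • a) := by
  ext i
  refine lastCases ?_ (fun j => ?_) i <;> simp

end Fin

lemma coneGen_eq_hull {E : Type*} [AddCommMonoid E] [Module ℝ E] (S : Set E) :
    coneGen S = PointedCone.hull ℝ S := by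
  ext x
  rw [SetLike.mem_coe, Submodule.mem_span_set']
  constructor
  · rintro ⟨k, c, w, hc, hw, rfl⟩
    exact ⟨k, fun i => ⟨c i, hc i⟩, fun i => ⟨w i, hw i⟩, rfl⟩
  · rintro ⟨k, c, w, rfl⟩
    exact ⟨k, fun i => c i, fun i => w i, fun i => (c i).2, fun i => (w i).2, rfl⟩

namespace PointedCone

variable {R : Type*} [Semiring R] [PartialOrder R] [IsOrderedRing R] {n : ℕ}

lemma convex_setOf_snoc_one_mem (C : PointedCone R (Fin (n + 1) → R)) :
    Convex R {y : Fin n → R | Fin.snoc y 1 ∈ C} := by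
  intro y hy z hz a b ha hb hab
  have hcomb : Fin.snoc (a • y + b • z) 1 = a • Fin.snoc y (1 : R) + b • Fin.snoc z 1 := by
    rw [Fin.smul_snoc, Fin.smul_snoc, Fin.snoc_add_snoc, smul_eq_mul, smul_eq_mul, mul_one,
      mul_one, hab]
  simpa only [mem_ofPred_eq, hcomb] using C.add_mem (C.smul_mem ha hy) (C.smul_mem hb hz)

lemma snoc_one_mem_hull_of_mem_convexHull {ι : Type*} {u : ι → Fin n → R} {y : Fin n → R}
    (hy : y ∈ convexHull R (range u)) :
    (Fin.snoc y 1 : Fin (n + 1) → R) ∈ hull R (range fun i => Fin.snoc (u i) (1 : R)) := by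
  have hsub : range u ⊆ {z : Fin n → R | (Fin.snoc z 1 : Fin (n + 1) → R) ∈
      hull R (range fun i => Fin.snoc (u i) (1 : R))} :=
    range_subset_iff.2 fun i => subset_hull (mem_range_self i)
  exact convexHull_min hsub (convex_setOf_snoc_one_mem _) hy

end PointedCone

theorem coneGen_eq_of_vertices_at_level_one_general (n k : ℕ) (Γ : Set ((Fin n → ℕ) × ℕ))
    (v : Fin (k + 1) → (Fin n → ℕ))
    (hv : ∀ i, (v i, 1) ∈ Γ)
    (hhull : convexHull ℝ (Set.range fun i => fun j => ((v i j : ℝ))) = okBody Γ)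
    (hin : ∀ p ∈ Γ, (fun j => (p.1 j : ℝ)) ∈ (p.2 : ℝ) • okBody Γ) :
    coneGen (toVec '' Γ) =
      coneGen (Set.range fun i => Fin.snoc (fun j => (v i j : ℝ)) (1 : ℝ)) := by
  rw [coneGen_eq_hull, coneGen_eq_hull]
  refine congrArg _ (le_antisymm (Submodule.span_le.2 ?_) (Submodule.span_le.2 ?_))
  · rintro _ ⟨p, hp, rfl⟩
    obtain ⟨y, hy, hpy : (p.2 : ℝ) • y = fun j => (p.1 j : ℝ)⟩ := hin p hp
    rw [← hhull] at hy
    have hlift : toVec p = (p.2 : ℝ) • Fin.snoc y 1 := by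
      rw [Fin.smul_snoc, hpy, smul_eq_mul, mul_one]
      rfl
    rw [SetLike.mem_coe, hlift]
    exact PointedCone.smul_mem _ p.2.cast_nonneg
      (PointedCone.snoc_one_mem_hull_of_mem_convexHull hy)
  · rintro _ ⟨i, rfl⟩
    exact PointedCone.subset_hull ⟨(v i, 1), hv i, by simp [toVec]⟩

/-- Let `Γ ⊆ ℕⁿ × ℕ` be a sub-semigroup such that the level-one set
`Γ₁ = {v : (v,1) ∈ Γ}` contains points `v₀, …, v_k` whose convex hull equals the Okounkov body
`Δ(Γ)`, and such that every point of `Γ` at height `m` lies in `m • Δ(Γ)`.  Then the cone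
generated by `Γ` is the rational polyhedral cone generated by `(v₀,1), …, (v_k,1)`. -/
theorem coneGen_eq_of_vertices_at_level_one (n k : ℕ) (Γ : Set ((Fin n → ℕ) × ℕ))
    (hadd : ∀ a ∈ Γ, ∀ b ∈ Γ, a + b ∈ Γ)
    (v : Fin (k + 1) → (Fin n → ℕ))
    (hv : ∀ i, (v i, 1) ∈ Γ)
    (hhull : convexHull ℝ (Set.range fun i => fun j => ((v i j : ℝ))) = okBody Γ)
    (hin : ∀ p ∈ Γ, (fun j => (p.1 j : ℝ)) ∈ (p.2 : ℝ) • okBody Γ) :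
    coneGen (toVec '' Γ) =
      coneGen (Set.range fun i => Fin.snoc (fun j => (v i j : ℝ)) (1 : ℝ)) :=
  coneGen_eq_of_vertices_at_level_one_general n k Γ v hv hhull hin
end

section
/- Gordan's lemma: the monoid of lattice points in a rational polyhedral convex cone in ℝⁿ is finitely generated. -/
open Set

/-!
If `x = ∑ tⱼ vⱼ` with `tⱼ ≥ 0`, then `x - ∑ ⌊tⱼ⌋ vⱼ = ∑ (tⱼ - ⌊tⱼ⌋) vⱼ` is a lattice point of the
zonotope `{∑ tⱼ vⱼ | 0 ≤ tⱼ ≤ 1}`, which also contains every `vⱼ`. So the lattice points of this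
bounded set, of which there are finitely many, generate the monoid.
-/

theorem mem_coneGen_range_iff {E ι : Type*} [AddCommMonoid E] [Module ℝ E] [Fintype ι]
    (V : ι → E) (x : E) :
    x ∈ coneGen (range V) ↔ ∃ t : ι → ℝ, (∀ j, 0 ≤ t j) ∧ x = ∑ j, t j • V j := by
  classical
  constructor
  · rintro ⟨m, c, w, hc, hw, rfl⟩
    choose g hg using hw
    refine ⟨fun j => ∑ i, if g i = j then c i else 0,
      fun j => Finset.sum_nonneg fun i _ => by split_ifs <;> simp [hc i], ?_⟩
    simp only [Finset.sum_smul, ite_smul, zero_smul]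
    rw [Finset.sum_comm]
    simp [hg]
  · rintro ⟨t, ht, rfl⟩
    let e := Fintype.equivFin ι
    refine ⟨Fintype.card ι, t ∘ e.symm, V ∘ e.symm, fun _ => ht _, fun _ => mem_range_self _, ?_⟩
    exact (e.symm.sum_comp fun j => t j • V j).symm

section LatticeZonotope

variable {ι σ : Type*} [Fintype ι]

def latticeZonotope (v : ι → σ → ℤ) : Set (σ → ℤ) :=
  {x | ∃ t : ι → ℝ, (∀ j, t j ∈ Icc 0 1) ∧
    (fun i => (x i : ℝ)) = ∑ j, t j • fun i => (v j i : ℝ)}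

theorem latticeZonotope_finite [Finite σ] (v : ι → σ → ℤ) : (latticeZonotope v).Finite := by
  let N : σ → ℤ := fun i => ∑ j, |v j i|
  refine (Set.Finite.pi' fun i => Set.finite_Icc (-N i) (N i)).subset ?_
  rintro x ⟨t, ht, hx⟩ i
  have hxi : (x i : ℝ) = ∑ j, t j * v j i := by simpa using congrFun hx i
  have : |(x i : ℝ)| ≤ N i := by
    push_cast [N, hxi]
    refine (Finset.abs_sum_le_sum_abs _ _).trans (Finset.sum_le_sum fun j _ => ?_)
    rw [abs_mul, abs_of_nonneg (ht j).1]
    exact mul_le_of_le_one_left (abs_nonneg _) (ht j).2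
  exact abs_le.mp (by exact_mod_cast this)

theorem mem_coneGen_of_mem_latticeZonotope {v : ι → σ → ℤ} {x : σ → ℤ}
    (hx : x ∈ latticeZonotope v) :
    (fun i => (x i : ℝ)) ∈ coneGen (range fun j i => (v j i : ℝ)) := by
  obtain ⟨t, ht, hx⟩ := hx
  exact (mem_coneGen_range_iff _ _).mpr ⟨t, fun j => (ht j).1, hx⟩

theorem apply_mem_latticeZonotope [DecidableEq ι] (v : ι → σ → ℤ) (j : ι) :
    v j ∈ latticeZonotope v := by
  refine ⟨Pi.single j 1, fun j' => ?_, ?_⟩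
  · rw [Pi.single_apply]
    split_ifs <;> simp
  · simp [Pi.single_apply, ite_smul]

theorem mem_closure_latticeZonotope {v : ι → σ → ℤ} {x : σ → ℤ}
    (hx : (fun i => (x i : ℝ)) ∈ coneGen (range fun j i => (v j i : ℝ))) :
    x ∈ AddSubmonoid.closure (latticeZonotope v) := by
  classical
  obtain ⟨t, ht, hx⟩ := (mem_coneGen_range_iff _ _).mp hx
  let q : ι → ℕ := fun j => ⌊t j⌋₊
  have hfrac : ∀ j, t j - q j ∈ Icc (0 : ℝ) 1 := fun j =>
    ⟨sub_nonneg.mpr (Nat.floor_le (ht j)), by linarith [Nat.lt_floor_add_one (t j)]⟩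
  have hr : x - ∑ j, q j • v j ∈ latticeZonotope v := by
    refine ⟨fun j => t j - q j, hfrac, funext fun i => ?_⟩
    simpa [sub_mul] using congrFun hx i
  rw [← sub_add_cancel x (∑ j, q j • v j)]
  refine add_mem (AddSubmonoid.subset_closure hr) (sum_mem fun j _ => nsmul_mem ?_ _)
  exact AddSubmonoid.subset_closure (apply_mem_latticeZonotope v j)

end LatticeZonotope

/-- **Gordan's lemma.** The monoid of lattice points in a rational polyhedral
convex cone in `ℝⁿ` (the cone of nonnegative real combinations of finitely many integral
vectors) is finitely generated as a monoid. -/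
theorem gordan (n k : ℕ) (v : Fin k → (Fin n → ℤ))
    (M : Set (Fin n → ℤ))
    (hM : M = {x : Fin n → ℤ | (fun i => (x i : ℝ)) ∈
      coneGen (Set.range fun j => fun i => ((v j i : ℝ)))}) :
    ∃ G : Finset (Fin n → ℤ), ↑G ⊆ M ∧
      ∀ x ∈ M, x ∈ AddSubmonoid.closure (G : Set (Fin n → ℤ)) := by
  subst hM
  refine ⟨(latticeZonotope_finite v).toFinset, ?_, ?_⟩
  · intro x hx
    exact mem_coneGen_of_mem_latticeZonotope ((latticeZonotope_finite v).mem_toFinset.mp hx)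
  · intro x hx
    simpa using mem_closure_latticeZonotope hx
end

section
/- A convex cone in ℝᵐ generated by finitely many vectors is a closed subset of ℝᵐ. -/
/-! Conic Carathéodory: if the vectors carrying a nonnegative combination are linearly dependent,
moving along a linear relation until the first coefficient reaches zero removes one of them,
so every point of the cone lies in the cone of a linearly independent subfamily. Such a cone is
the image of the closed orthant under an injective linear map with finite-dimensional domain,
a closed embedding, so the cone is a finite union of closed sets. -/

open Finset

variable {𝕜 E ι : Type*}

def conicSpan (𝕜 : Type*) [Semiring 𝕜] [PartialOrder 𝕜] [AddCommMonoid E] [Module 𝕜 E]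
    (v : ι → E) (s : Finset ι) : Set E :=
  {x | ∃ t : ι → 𝕜, (∀ i ∈ s, 0 ≤ t i) ∧ ∑ i ∈ s, t i • v i = x}

section Semiring

variable [Semiring 𝕜] [PartialOrder 𝕜] [AddCommMonoid E] [Module 𝕜 E]

theorem conicSpan_mono {v : ι → E} {s s' : Finset ι} (h : s' ⊆ s) :
    conicSpan 𝕜 v s' ⊆ conicSpan 𝕜 v s := by
  classical
  rintro _ ⟨t, ht, rfl⟩
  refine ⟨fun i ↦ if i ∈ s' then t i else 0, fun i _ ↦ ?_, ?_⟩
  · by_cases hi : i ∈ s' <;> simp [hi, ht]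
  · rw [← sum_subset h (fun i _ hi ↦ by simp [hi])]
    exact sum_congr rfl fun i hi ↦ by simp [hi]

theorem conicSpan_eq_image_Ici (v : ι → E) (s : Finset ι) :
    conicSpan 𝕜 v s = Fintype.linearCombination 𝕜 (fun i : s ↦ v i) '' Set.Ici 0 := by
  classical
  ext x
  constructor
  · rintro ⟨t, ht, rfl⟩
    exact ⟨fun i ↦ t i, fun i ↦ ht i i.2, by
      rw [Fintype.linearCombination_apply, sum_coe_sort s (fun i ↦ t i • v i)]⟩
  · rintro ⟨t, ht, rfl⟩
    refine ⟨fun i ↦ if h : i ∈ s then t ⟨i, h⟩ else 0,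
      fun i hi ↦ by simpa [hi] using ht ⟨i, hi⟩, ?_⟩
    rw [Fintype.linearCombination_apply, ← sum_attach]
    exact sum_congr rfl fun i _ ↦ by simp

end Semiring

section Caratheodory

variable [Field 𝕜] [LinearOrder 𝕜] [IsStrictOrderedRing 𝕜]

lemma Finset.exists_sub_mul_eq_zero_and_nonneg (s : Finset ι) {t c : ι → 𝕜}
    (ht : ∀ i ∈ s, 0 ≤ t i) (hc : ∃ j ∈ s, 0 < c j) :
    ∃ a : 𝕜, ∃ j ∈ s, t j - a * c j = 0 ∧ ∀ i ∈ s, 0 ≤ t i - a * c i := by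
  -- `a` is the largest step keeping `t - a • c` nonnegative on `s`.
  obtain ⟨j, hj, hjmin⟩ := (s.filter (0 < c ·)).exists_min_image (fun i ↦ t i / c i)
    (by simpa [Finset.Nonempty] using hc)
  rw [mem_filter] at hj
  refine ⟨t j / c j, j, hj.1, by rw [div_mul_cancel₀ _ hj.2.ne', sub_self], fun i hi ↦ ?_⟩
  rcases lt_or_ge 0 (c i) with hci | hci
  · have := hjmin i (mem_filter.2 ⟨hi, hci⟩)
    rw [le_div_iff₀ hci] at this
    linarith
  · have : 0 ≤ t j / c j := div_nonneg (ht j hj.1) hj.2.le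
    nlinarith [ht i hi]

variable [AddCommGroup E] [Module 𝕜 E]

theorem exists_linearIndepOn_of_mem_conicSpan {v : ι → E} {s : Finset ι} {x : E}
    (hx : x ∈ conicSpan 𝕜 v s) :
    ∃ s' ⊆ s, LinearIndepOn 𝕜 v s' ∧ x ∈ conicSpan 𝕜 v s' := by
  classical
  induction s using Finset.strongInduction generalizing x with
  | _ s ih =>
  obtain ⟨t, ht, rfl⟩ := hx
  by_cases hv : LinearIndepOn 𝕜 v s
  · exact ⟨s, subset_rfl, hv, t, ht, rfl⟩
  obtain ⟨c, hc, j₀, hj₀, hcj₀⟩ :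
      ∃ c : ι → 𝕜, ∑ i ∈ s, c i • v i = 0 ∧ ∃ j ∈ s, 0 < c j := by
    obtain ⟨f, hf, j, hj, hfj⟩ := not_linearIndepOn_finset_iff.1 hv
    rcases hfj.lt_or_gt with hneg | hpos
    · exact ⟨-f, by simp [hf], j, hj, by simpa using hneg⟩
    · exact ⟨f, hf, j, hj, hpos⟩
  obtain ⟨a, j, hj, htj, hnonneg⟩ :=
    s.exists_sub_mul_eq_zero_and_nonneg ht ⟨j₀, hj₀, hcj₀⟩
  have hsum : ∑ i ∈ s.erase j, (t i - a * c i) • v i = ∑ i ∈ s, t i • v i := by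
    rw [sum_erase _ (by rw [htj, zero_smul])]
    simp only [sub_smul, mul_smul, sum_sub_distrib, ← smul_sum, hc, smul_zero, sub_zero]
  obtain ⟨s', hs', hv', hx'⟩ := ih _ (erase_ssubset hj)
    ⟨fun i ↦ t i - a * c i, fun i hi ↦ hnonneg i (mem_of_mem_erase hi), hsum⟩
  exact ⟨s', hs'.trans (erase_subset j s), hv', hx'⟩

end Caratheodory

section Topology

variable [AddCommGroup E] [Module ℝ E] [TopologicalSpace E] [IsTopologicalAddGroup E]
  [ContinuousSMul ℝ E] [T2Space E]

theorem LinearIndepOn.isClosed_conicSpan {v : ι → E} {s : Finset ι}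
    (hv : LinearIndepOn ℝ v s) : IsClosed (conicSpan ℝ v s) := by
  rw [conicSpan_eq_image_Ici]
  refine (LinearMap.isClosedEmbedding_of_injective ?_).isClosedMap _ isClosed_Ici
  exact LinearMap.ker_eq_bot.2 hv.fintypeLinearCombination_injective

theorem isClosed_conicSpan (v : ι → E) (s : Finset ι) : IsClosed (conicSpan ℝ v s) := by
  have hunion : conicSpan ℝ v s =
      ⋃ s' ∈ s.powerset, ⋃ (_ : LinearIndepOn ℝ v s'), conicSpan ℝ v s' := by
    refine subset_antisymm (fun x hx ↦ ?_) (Set.iUnion₂_subset fun s' hs' ↦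
      Set.iUnion_subset fun _ ↦ conicSpan_mono (mem_powerset.1 hs'))
    obtain ⟨s', hs', hv, hx'⟩ := exists_linearIndepOn_of_mem_conicSpan hx
    exact Set.mem_biUnion (mem_powerset.2 hs') (Set.mem_iUnion_of_mem hv hx')
  rw [hunion]
  exact isClosed_biUnion_finset fun _ _ ↦
    isClosed_iUnion_of_finite fun hv ↦ hv.isClosed_conicSpan

end Topology

/-- A convex cone in `ℝᵐ` generated by finitely many vectors
`v₁, …, v_k`, i.e. the set `{t₁ • v₁ + ⋯ + t_k • v_k : tᵢ ≥ 0}`, is a closed subset of `ℝᵐ`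
in the Euclidean topology. -/
theorem finitely_generated_cone_isClosed (m k : ℕ) (v : Fin k → (Fin m → ℝ)) :
    IsClosed {x : Fin m → ℝ |
      ∃ t : Fin k → ℝ, (∀ i, 0 ≤ t i) ∧ x = ∑ i, t i • v i} := by
  convert isClosed_conicSpan v univ using 1
  ext x
  simp [conicSpan, eq_comm]
end

section
/- Let Γ ⊆ ℕⁿ × ℕ be a semigroup, and suppose every element of Γ with last coordinate m lies in m·Δ for the simplex Δ = conv(0, c·e₁, …, c·e_{n-1}, c·d·e_n), and that the points (0,1), (c·e₁,1), …, (c·e_{n-1},1), (c·d·e_n,1) all lie in Γ. Then Γ is finitely generated. -/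
open Set Pointwise

theorem exists_finset_subset_closure_of_subset_add_closure {M : Type*}
    [AddCommMonoid M] {Γ R V : Set M} (hR : R.Finite) (hV : V.Finite) (hVΓ : V ⊆ Γ)
    (hΓ : Γ ⊆ R + ↑(AddSubmonoid.closure V)) :
    ∃ G : Finset M, ↑G ⊆ Γ ∧ Γ ⊆ ↑(AddSubmonoid.closure (G : Set M)) := by
  have := hV.fintype
  let comb : (V → ℕ) → M := fun k => ∑ v : V, k v • (v : M)
  have comb_add : ∀ k l, comb (k + l) = comb k + comb l := fun k l => by
    simp only [comb, Pi.add_apply, add_nsmul, Finset.sum_add_distrib]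
  have comb_mem : ∀ k, comb k ∈ AddSubmonoid.closure V := fun k =>
    sum_mem fun v _ => nsmul_mem (AddSubmonoid.subset_closure v.2) _
  -- By Dickson's lemma each fibre `{k | r + comb k ∈ Γ}` has finitely many minimal elements.
  let B : M → Set (V → ℕ) := fun r => {k | Minimal (fun k => r + comb k ∈ Γ) k}
  have hB : ∀ r, (B r).Finite := fun r =>
    WellQuasiOrderedLE.finite_of_isAntichain (setOfPred_minimal_antichain _)
  let G : Set M := V ∪ ⋃ r ∈ R, (fun k => r + comb k) '' B r
  have hG : G.Finite := hV.union (hR.biUnion fun r _ => (hB r).image _)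
  refine ⟨hG.toFinset, ?_, ?_⟩
  · rw [hG.coe_toFinset]
    rintro _ (hv | hx)
    · exact hVΓ hv
    · obtain ⟨r, -, k, hk, rfl⟩ := mem_iUnion₂.1 hx
      exact hk.1
  · rintro _ hx
    obtain ⟨r, hr, _, hy, rfl⟩ := hΓ hx
    obtain ⟨k, rfl⟩ := AddSubmonoid.mem_closure_iff_of_fintype.1 hy
    obtain ⟨b, hbk, hb⟩ := exists_minimal_le_of_wellFoundedLT (fun k => r + comb k ∈ Γ) k hx
    have hsplit : r + comb k = (r + comb b) + comb (k - b) := by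
      rw [add_assoc, ← comb_add, add_tsub_cancel_of_le hbk]
    show r + comb k ∈ _
    rw [hG.coe_toFinset, hsplit]
    refine add_mem (AddSubmonoid.subset_closure (Or.inr ?_))
      (AddSubmonoid.closure_mono subset_union_left (comb_mem _))
    exact mem_iUnion₂.2 ⟨r, hr, b, hb, rfl⟩

theorem sum_div_le_one_of_mem_convexHull {ι : Type*} [Fintype ι] [DecidableEq ι] {w : ι → ℝ}
    (hw : ∀ i, 0 < w i) {x : ι → ℝ}
    (hx : x ∈ convexHull ℝ (insert 0 {y | ∃ i, y = Pi.single i (w i)})) :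
    ∑ i, x i / w i ≤ 1 := by
  have hlin : IsLinearMap ℝ fun x : ι → ℝ => ∑ i, x i / w i :=
    ⟨fun x y => by simp only [Pi.add_apply, add_div, Finset.sum_add_distrib],
     fun a x => by simp only [Pi.smul_apply, smul_eq_mul, mul_div_assoc, Finset.mul_sum]⟩
  refine convexHull_min ?_ (convex_halfSpace_le hlin 1) hx
  rintro _ (rfl | ⟨i, rfl⟩)
  · simp
  · simp [Pi.single_apply, ite_div, (hw i).ne']

theorem sum_div_le_of_mem_smul_convexHull {ι : Type*} [Fintype ι] [DecidableEq ι] {w : ι → ℕ}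
    (hw : ∀ i, 0 < w i) {a : ι → ℕ} {m : ℕ}
    (ha : (fun i => (a i : ℝ)) ∈
      (m : ℝ) • convexHull ℝ (insert 0 {y | ∃ i, y = Pi.single i (w i : ℝ)})) :
    ∑ i, a i / w i ≤ m := by
  obtain ⟨x, hx, hxa⟩ := ha
  have hsum := sum_div_le_one_of_mem_convexHull (fun i => Nat.cast_pos.2 (hw i)) hx
  have : ((∑ i, a i / w i : ℕ) : ℝ) ≤ m := calc
    ((∑ i, a i / w i : ℕ) : ℝ) ≤ ∑ i, (a i : ℝ) / w i := by
      push_cast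
      exact Finset.sum_le_sum fun i _ => Nat.cast_div_le
    _ = m * ∑ i, x i / w i := by
      simp only [← congrFun hxa, Pi.smul_apply, smul_eq_mul, mul_div_assoc, Finset.mul_sum]
    _ ≤ m := mul_le_of_le_one_right m.cast_nonneg hsum
  exact_mod_cast this

theorem eq_mod_add_nsmul_add_sum_nsmul {ι : Type*} [Fintype ι] [DecidableEq ι] (w a : ι → ℕ)
    {m : ℕ} (h : ∑ i, a i / w i ≤ m) :
    (a, m) = ((fun i => a i % w i), 0) + ((m - ∑ i, a i / w i) • ((0 : ι → ℕ), 1) +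
      ∑ i, (a i / w i) • ((Pi.single i (w i) : ι → ℕ), 1)) := by
  ext j
  · simp [Prod.fst_sum, Finset.sum_apply, Pi.single_apply, Nat.mod_add_div']
  · simp only [Prod.snd_add, Prod.snd_sum, Prod.smul_mk, smul_eq_mul, mul_one, zero_add]
    omega

theorem sandwiched_semigroup_fg_general (n : ℕ) (c d : ℕ) (hc : 0 < c) (hd : 0 < d)
    (Γ : Set ((Fin n → ℕ) × ℕ))
    (Δ : Set (Fin n → ℝ))
    (hΔ : Δ = convexHull ℝ (insert (0 : Fin n → ℝ)
      {x | ∃ i : Fin n,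
        x = Pi.single i (if i.val = n - 1 then ((c * d : ℕ) : ℝ) else (c : ℝ))}))
    (hunder : ∀ p ∈ Γ, (fun i => (p.1 i : ℝ)) ∈ (p.2 : ℝ) • Δ)
    (hzero : ((0 : Fin n → ℕ), 1) ∈ Γ)
    (hvert : ∀ i : Fin n,
      ((Pi.single i (if i.val = n - 1 then c * d else c) : Fin n → ℕ), 1) ∈ Γ) :
    ∃ G : Finset ((Fin n → ℕ) × ℕ), ↑G ⊆ Γ ∧
      ∀ x ∈ Γ, x ∈ AddSubmonoid.closure (G : Set ((Fin n → ℕ) × ℕ)) := by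
  set w : Fin n → ℕ := fun i => if i.val = n - 1 then c * d else c
  have hw : ∀ i, 0 < w i := fun i => by dsimp only [w]; split <;> positivity
  have hΔw : Δ = convexHull ℝ (insert 0 {y | ∃ i, y = Pi.single i (w i : ℝ)}) := by
    simp only [hΔ, w, Nat.cast_ite]
  set V := insert ((0 : Fin n → ℕ), 1) (range fun i => ((Pi.single i (w i) : Fin n → ℕ), 1))
  set R := (univ.pi fun i => Iio (w i)) ×ˢ ({0} : Set ℕ)
  have hR : R.Finite := (Set.Finite.pi fun i => finite_Iio (w i)).prod (finite_singleton 0)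
  have hV : V.Finite := (finite_range _).insert _
  refine exists_finset_subset_closure_of_subset_add_closure hR hV ?_ ?_
  · rintro _ (rfl | ⟨i, rfl⟩)
    exacts [hzero, hvert i]
  · rintro ⟨a, m⟩ hp
    have hfloor := sum_div_le_of_mem_smul_convexHull hw (hΔw ▸ hunder _ hp)
    rw [eq_mod_add_nsmul_add_sum_nsmul w a hfloor]
    refine Set.add_mem_add (mem_prod.2 ⟨mem_univ_pi.2 fun i => Nat.mod_lt _ (hw i), rfl⟩)
      (add_mem ?_ ?_)
    · exact AddSubmonoid.nsmul_mem _ (AddSubmonoid.subset_closure (mem_insert _ _)) _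
    · exact sum_mem fun i _ => AddSubmonoid.nsmul_mem _
        (AddSubmonoid.subset_closure (mem_insert_of_mem _ (mem_range_self i))) _

/-- Let `Γ ⊆ ℕⁿ × ℕ` be a semigroup such that every element of `Γ` at
height `m` lies in `m • Δ` for the simplex `Δ = conv(0, c·e₁, …, c·e_{n-1}, c·d·e_n)`, and
such that `(0,1), (c·e₁,1), …, (c·e_{n-1},1), (c·d·e_n,1)` all lie in `Γ`.  Then `Γ` is
finitely generated. -/
theorem sandwiched_semigroup_fg (n : ℕ) (hn : 0 < n) (c d : ℕ) (hc : 0 < c) (hd : 0 < d)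
    (Γ : Set ((Fin n → ℕ) × ℕ))
    (hadd : ∀ a ∈ Γ, ∀ b ∈ Γ, a + b ∈ Γ)
    (Δ : Set (Fin n → ℝ))
    (hΔ : Δ = convexHull ℝ (insert (0 : Fin n → ℝ)
      {x | ∃ i : Fin n,
        x = Pi.single i (if i.val = n - 1 then ((c * d : ℕ) : ℝ) else (c : ℝ))}))
    (hunder : ∀ p ∈ Γ, (fun i => (p.1 i : ℝ)) ∈ (p.2 : ℝ) • Δ)
    (hzero : ((0 : Fin n → ℕ), 1) ∈ Γ)
    (hvert : ∀ i : Fin n,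
      ((Pi.single i (if i.val = n - 1 then c * d else c) : Fin n → ℕ), 1) ∈ Γ) :
    ∃ G : Finset ((Fin n → ℕ) × ℕ), ↑G ⊆ Γ ∧
      ∀ x ∈ Γ, x ∈ AddSubmonoid.closure (G : Set ((Fin n → ℕ) × ℕ)) :=
  sandwiched_semigroup_fg_general n c d hc hd Γ Δ hΔ hunder hzero hvert
end

section
/- Any intermediate monoid N ⊆ Γ ⊆ M, where N is a finitely generated monoid, M is a commutative cancellative monoid that is a finitely generated N-module (M = ⋃ᵢ(mᵢ + N) for finitely many mᵢ), is itself finitely generated. -/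
/-!
Write `N` as the image of `ℕⁿ` under an additive map `φ`. For a translate `t + N`, the exponent
vectors `a` with `t + φ a ∈ Γ` have, by Dickson's lemma, finitely many minimal elements `f`, and
every such `t + φ a` is `(t + φ f) + φ (a - f)`. Hence `Γ` is generated by the generators of `N`
together with the finitely many elements `t + φ f`.
-/

open Pointwise

theorem Set.IsPWO.exists_finite_subset_forall_exists_le {α : Type*} [PartialOrder α] {s : Set α}
    (hs : s.IsPWO) : ∃ t ⊆ s, t.Finite ∧ ∀ a ∈ s, ∃ b ∈ t, b ≤ a := by
  refine ⟨{x | Minimal (· ∈ s) x}, fun x hx => hx.prop, ?_, ?_⟩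
  · exact (setOfPred_minimal_antichain _).finite_of_partiallyWellOrderedOn
      (hs.mono fun x hx => hx.prop)
  · intro a ha
    obtain ⟨b, hba, hb⟩ := hs.exists_le_minimal ha
    exact ⟨b, hb, hba⟩

namespace AddSubmonoid

variable {M : Type*} [AddCommMonoid M] {N : AddSubmonoid M}

theorem FG.exists_finite_subset_subset_add (hN : N.FG) {S : Set M} (hS : S ⊆ N) :
    ∃ G ⊆ S, G.Finite ∧ S ⊆ G + N := by
  obtain ⟨n, φ, rfl⟩ := fg_iff_exists_fin_addMonoidHom.1 hN
  obtain ⟨F, hFS, hF, hFmin⟩ :=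
    (Set.isPWO_of_wellQuasiOrderedLE (φ ⁻¹' S)).exists_finite_subset_forall_exists_le
  refine ⟨φ '' F, Set.image_subset_iff.2 hFS, hF.image φ, fun x hx => ?_⟩
  obtain ⟨a, rfl⟩ := hS hx
  obtain ⟨f, hfF, hfa⟩ := hFmin a hx
  obtain ⟨c, rfl⟩ := le_iff_exists_add.1 hfa
  exact ⟨φ f, Set.mem_image_of_mem φ hfF, φ c, AddMonoidHom.mem_mrange.2 ⟨c, rfl⟩,
    (map_add φ f c).symm⟩

theorem fg_of_le_of_subset_finite_add {Γ : AddSubmonoid M} {T : Set M} (hN : N.FG)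
    (hT : T.Finite) (hNΓ : N ≤ Γ) (hΓT : (Γ : Set M) ⊆ T + N) : Γ.FG := by
  choose G hGΓ hG hGN using fun t : M =>
    hN.exists_finite_subset_subset_add (S := {n ∈ N | t + n ∈ Γ}) fun _ hn => hn.1
  set E : Set M := ⋃ t ∈ T, (t + ·) '' G t
  have hEΓ : E ⊆ Γ :=
    Set.iUnion₂_subset fun t _ => Set.image_subset_iff.2 fun g hg => (hGΓ t hg).2
  have hΓ : Γ = N ⊔ closure E := by
    refine le_antisymm (fun x hx => ?_) (sup_le hNΓ (closure_le.2 hEΓ))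
    obtain ⟨t, ht, n, hn, rfl⟩ := hΓT hx
    obtain ⟨g, hg, n', hn', rfl⟩ := hGN t ⟨hn, hx⟩
    show t + (g + n') ∈ _
    rw [← add_assoc, add_comm]
    refine add_mem (mem_sup_left hn') (mem_sup_right (subset_closure ?_))
    exact Set.mem_biUnion ht ⟨g, hg, rfl⟩
  rw [hΓ]
  exact hN.sup ((fg_iff _).2 ⟨E, rfl, hT.biUnion fun t _ => (hG t).image _⟩)

end AddSubmonoid

/-- Let `N ⊆ Γ ⊆ M` be submonoids of `ℤᵏ` (commutative and cancellative),
with `N` finitely generated and `M` a finitely generated `N`-module, i.e. `M` is the union of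
finitely many translates `mᵢ + N`.  Then `Γ` is itself finitely generated. -/
theorem intermediate_monoid_fg (k : ℕ)
    (N Γ M : AddSubmonoid (Fin k → ℤ))
    (hNΓ : N ≤ Γ) (hΓM : Γ ≤ M)
    (hNfg : N.FG)
    (hmod : ∃ T : Finset (Fin k → ℤ), ↑T ⊆ (M : Set (Fin k → ℤ)) ∧
      ∀ x ∈ M, ∃ t ∈ T, ∃ y ∈ N, x = t + y) :
    Γ.FG := by
  obtain ⟨T, -, hT⟩ := hmod
  refine AddSubmonoid.fg_of_le_of_subset_finite_add hNfg T.finite_toSet hNΓ fun x hx => ?_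
  obtain ⟨t, ht, y, hy, rfl⟩ := hT x (hΓM hx)
  exact Set.add_mem_add ht hy
end
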